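/- arXiv:1906.04899 — 5 statements merged into one kernel-verified Lean document; each statement's English description precedes it below -/
import Mathlib

section
/- Let T be a positive integer, G a simple graph on N = {1,...,T}, x : N → ℝ with x_t ≥ 0 for all t, y : N → ℝ, and d a natural number. For each t let S_t = {t' < t : {t,t'} ∈ E(G)}, and assume: (i) Σ_{t' ∈ S_t} x_{t'} ≤ α(G[S_t]), where α(G[S_t]) is the maximum cardinality of a G-independent subset of S_t; and (ii) α(G[S_t]) ≤ d for every t. Define π_T,...,π_1 by the backward recursion π_t = Σ_{t' > t, {t,t'} ∈ E} x_{t'} · max(y_{t'} − π_{t'}, 0). Then Σ_{t=1}^T x_t · max(y_t − π_t, 0) ≥ (1/(d+1)) · Σ_{t=1}^T x_t y_t. -/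
open Finset

attribute [local instance] Classical.propDecidable

/-- Lemma 2 of Baek–Ma: the restricted prophet earns at least
`1/(d+1)` times the welfare of the actual prophet. `S_t` is the set of strictly
earlier neighbors of `t`, and `α(G[S_t])` is formalized as the maximal cardinality
of a `G`-independent subset of `S_t`. -/
theorem stmt_3
    (T : ℕ) (hT : 0 < T)
    (G : SimpleGraph (Fin T))
    (x y : Fin T → ℝ) (hx : ∀ t, 0 ≤ x t)
    (d : ℕ)
    -- (i) ∑_{t' ∈ S_t} x_{t'} ≤ α(G[S_t])
    (hi : ∀ t : Fin T,
      ∑ t' ∈ univ.filter (fun t' => t' < t ∧ G.Adj t t'), x t' ≤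
        (((((univ.filter (fun t' => t' < t ∧ G.Adj t t')).powerset).filter
          (fun A : Finset (Fin T) => ∀ a ∈ A, ∀ b ∈ A, a ≠ b → ¬ G.Adj a b)).sup
            Finset.card : ℕ) : ℝ))
    -- (ii) α(G[S_t]) ≤ d
    (hii : ∀ t : Fin T,
      ((((univ.filter (fun t' => t' < t ∧ G.Adj t t')).powerset).filter
        (fun A : Finset (Fin T) => ∀ a ∈ A, ∀ b ∈ A, a ≠ b → ¬ G.Adj a b)).sup
          Finset.card) ≤ d)
    -- backward recursion defining π
    (pi : Fin T → ℝ)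
    (hpi : ∀ t, pi t = ∑ t' ∈ univ.filter (fun t' => t < t' ∧ G.Adj t t'),
      x t' * max (y t' - pi t') 0) :
    ∑ t, x t * max (y t - pi t) 0 ≥ (1 / (d + 1) : ℝ) * ∑ t, x t * y t := by

  have hm0 : ∀ t : Fin T, 0 ≤ max (y t - pi t) 0 := fun t => le_max_right _ _
  have hpi0 : ∀ t, 0 ≤ pi t := by
    intro t; rw [hpi t]
    exact Finset.sum_nonneg fun t' _ => mul_nonneg (hx t') (hm0 t')
  have key : ∀ t, x t * y t ≤ x t * max (y t - pi t) 0 + x t * pi t := by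
    intro t
    have h1 : y t - pi t ≤ max (y t - pi t) 0 := le_max_left _ _
    nlinarith [hx t]
  have hswap : ∑ t, x t * pi t
      = ∑ t', (∑ t ∈ univ.filter (fun s => s < t' ∧ G.Adj t' s), x t)
          * (x t' * max (y t' - pi t') 0) := by
    calc ∑ t, x t * pi t
        = ∑ t, ∑ t' ∈ univ.filter (fun t' => t < t' ∧ G.Adj t t'),
            x t * (x t' * max (y t' - pi t') 0) := by
          refine Finset.sum_congr rfl fun t _ => ?_
          rw [hpi t, Finset.mul_sum]
      _ = ∑ t', ∑ t ∈ univ.filter (fun s => s < t' ∧ G.Adj t' s),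
            x t * (x t' * max (y t' - pi t') 0) := by
          apply Finset.sum_comm'
          intro a b
          simp only [Finset.mem_filter, Finset.mem_univ, true_and]
          constructor
          · rintro ⟨h1, h2⟩; exact ⟨⟨h1, h2.symm⟩, trivial⟩
          · rintro ⟨⟨h1, h2⟩, -⟩; exact ⟨h1, h2.symm⟩
      _ = _ := by
          refine Finset.sum_congr rfl fun t' _ => ?_
          rw [Finset.sum_mul]
  have hbound : ∑ t, x t * pi t ≤ ∑ t, (d : ℝ) * (x t * max (y t - pi t) 0) := by
    rw [hswap]
    refine Finset.sum_le_sum fun t' _ => ?_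
    have h1 : ∑ t ∈ univ.filter (fun s => s < t' ∧ G.Adj t' s), x t ≤ (d : ℝ) := by
      refine (hi t').trans ?_
      exact_mod_cast hii t'
    exact mul_le_mul_of_nonneg_right h1 (mul_nonneg (hx t') (hm0 t'))
  have hmain : ∑ t, x t * y t ≤ ((d : ℝ) + 1) * ∑ t, x t * max (y t - pi t) 0 := by
    have h1 : ∑ t, x t * y t ≤ ∑ t, (x t * max (y t - pi t) 0 + x t * pi t) :=
      Finset.sum_le_sum fun t _ => key t
    rw [Finset.sum_add_distrib] at h1
    have h2 : ∑ t, (d : ℝ) * (x t * max (y t - pi t) 0)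
        = (d : ℝ) * ∑ t, x t * max (y t - pi t) 0 := (Finset.mul_sum _ _ _).symm
    nlinarith [hbound]
  have hd : (0 : ℝ) < (d : ℝ) + 1 := by positivity
  rw [ge_iff_le, one_div, inv_mul_le_iff₀ hd]
  exact hmain
end

section
/- Let T be a positive integer, V_1,...,V_T independent, finitely supported, nonnegative real random variables, M a matroid on N = {1,...,T} with independent-set family I, and G a simple graph on N. Let x : N → [0,1] and y : N → ℝ satisfy: for every t there is a Borel set B_t ⊆ ℝ with P(V_t ∈ B_t) = x_t and E[V_t · 1(V_t ∈ B_t)] = x_t y_t. Define π_t by the backward recursion π_t = Σ_{t' > t, {t,t'} ∈ E} x_{t'} · max(y_{t'} − π_{t'}, 0). Let τ be any nonnegative-valued function of pairs (t, Y') with Y' ⊆ {1,...,t−1}. Define the random accepted sets by Y_0 = ∅ and, for t = 1,...,T: t is accepted (Y_t = Y_{t−1} ∪ {t}) if and only if Y_{t−1} ∪ {t} ∈ I, Y_{t−1} ∪ {t} is independent in G, and V_t ≥ τ(t, Y_{t−1}) + π_t; otherwise Y_t = Y_{t−1}. Let Y = Y_T. Then E[ Σ_{t ∈ Y} (V_t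 − τ(t, Y_{t−1})) ] ≥ E[ Σ over t with Y_{t−1} ∪ {t} ∈ I of x_t · max(y_t − τ(t, Y_{t−1}) − π_t, 0) ]. -/
/-!
Split the prophet's surplus over the agents `t` whose matroid insertion `insert t Y_{t-1}` is
independent. If `t` is also not blocked by the graph, then `Y_{t-1}` and the price
`τ(t, Y_{t-1}) + π_t` depend only on the agents before `t`, so conditionally on them `V_t` is
still distributed as `w t`, and on the quantile event `B_t` (mass `x_t`, mean `y_t`) the policy's
realised surplus `(V_t - τ - π_t)^+` dominates `x_t (y_t - τ - π_t)^+`. If `t` is blocked by the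
graph, some earlier neighbour `z` was accepted, and `x_t (y_t - π_t)^+` is one of the summands of
the graph price `π_z` that the policy collects on top of `V_z - τ - π_z` when accepting `z`.
-/

open Finset Function

section PiExpect

variable {ι : Type*} [Fintype ι] [DecidableEq ι] {Ω : ι → Type*}

theorem prod_apply_update_mul {M : Type*} [CommMonoid M] (w : ∀ i, Ω i → M) (t : ι)
    (ω : ∀ i, Ω i) (a : Ω t) :
    (∏ i, w i (update ω t a i)) * w t (ω t) = (∏ i, w i (ω i)) * w t a := by
  have h : ∀ b : Ω t, ∏ i, w i (update ω t b i) = w t b * ∏ i ∈ univ \ {t}, w i (ω i) :=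
    fun b => by simp only [apply_update w ω t b, prod_update_of_mem (mem_univ t)]
  have hω : ∏ i, w i (ω i) = w t (ω t) * ∏ i ∈ univ \ {t}, w i (ω i) := by
    simpa only [update_eq_self] using h (ω t)
  rw [h, hω]
  ac_rfl

variable [∀ i, Fintype (Ω i)]

def piExpect (w : ∀ i, Ω i → ℝ) (F : (∀ i, Ω i) → ℝ) : ℝ :=
  ∑ ω, (∏ i, w i (ω i)) * F ω

variable {w : ∀ i, Ω i → ℝ}

theorem piExpect_mono (hw : ∀ i a, 0 ≤ w i a) {F G : (∀ i, Ω i) → ℝ} (h : ∀ ω, F ω ≤ G ω) :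
    piExpect w F ≤ piExpect w G :=
  sum_le_sum fun ω _ => mul_le_mul_of_nonneg_left (h ω) (prod_nonneg fun i _ => hw i (ω i))

theorem piExpect_add (F G : (∀ i, Ω i) → ℝ) :
    piExpect w (fun ω => F ω + G ω) = piExpect w F + piExpect w G := by
  simp only [piExpect, mul_add, sum_add_distrib]

theorem piExpect_sum {κ : Type*} (s : Finset κ) (F : κ → (∀ i, Ω i) → ℝ) :
    piExpect w (fun ω => ∑ k ∈ s, F k ω) = ∑ k ∈ s, piExpect w (F k) := by
  simp only [piExpect, mul_sum]
  exact sum_comm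

/-- The involution `(ω, a) ↦ (update ω t a, ω t)` preserves the weight
`(∏ i, w i (ω i)) * w t a`. -/
theorem piExpect_sum_update (t : ι) (ht : ∑ a, w t a = 1) (F : (∀ i, Ω i) → ℝ) :
    piExpect w (fun ω => ∑ a, w t a * F (update ω t a)) = piExpect w F := by
  let swap : Equiv.Perm ((∀ i, Ω i) × Ω t) :=
    Involutive.toPerm (fun p => (update p.1 t p.2, p.1 t)) fun p => by
      simp only [update_idem, update_self, update_eq_self]
  calc piExpect w (fun ω => ∑ a, w t a * F (update ω t a))
      = ∑ p : (∀ i, Ω i) × Ω t, (∏ i, w i (p.1 i)) * w t p.2 * F (update p.1 t p.2) := by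
        simp only [piExpect, mul_sum, Fintype.sum_prod_type, mul_assoc]
    _ = ∑ p : (∀ i, Ω i) × Ω t, (∏ i, w i (p.1 i)) * w t p.2 * F p.1 := by
        rw [← Equiv.sum_comp swap]
        refine sum_congr rfl fun ⟨ω, a⟩ _ => ?_
        change (∏ i, w i (update ω t a i)) * w t (ω t) * F (update (update ω t a) t (ω t)) = _
        rw [prod_apply_update_mul w, update_idem, update_eq_self]
    _ = piExpect w F := by
        simp only [piExpect, Fintype.sum_prod_type, mul_right_comm _ (w t _), ← mul_sum,
          ht, mul_one]

theorem mul_max_sub_le_sum_mul_max_sub {α : Type*} [Fintype α] {w v : α → ℝ}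
    (hw : ∀ a, 0 ≤ w a) {s : Finset α} {x y : ℝ} (hx : ∑ a ∈ s, w a = x)
    (hxy : ∑ a ∈ s, w a * v a = x * y) (c : ℝ) :
    x * max (y - c) 0 ≤ ∑ a, w a * max (v a - c) 0 := by
  have hx0 : 0 ≤ x := hx ▸ sum_nonneg fun a _ => hw a
  have hpos : ∀ a, 0 ≤ w a * max (v a - c) 0 := fun a => mul_nonneg (hw a) (le_max_right _ _)
  rw [mul_max_of_nonneg _ _ hx0, mul_zero]
  refine max_le ?_ (sum_nonneg fun a _ => hpos a)
  calc x * (y - c) = ∑ a ∈ s, w a * (v a - c) := by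
        simp only [mul_sub, sum_sub_distrib, ← sum_mul, hx, hxy]
    _ ≤ ∑ a ∈ s, w a * max (v a - c) 0 :=
        sum_le_sum fun a _ => mul_le_mul_of_nonneg_left (le_max_left _ _) (hw a)
    _ ≤ ∑ a, w a * max (v a - c) 0 :=
        sum_le_sum_of_subset_of_nonneg (subset_univ s) fun a _ _ => hpos a

/-- Conditionally on the coordinates other than `t`, this is `mul_max_sub_le_sum_mul_max_sub`. -/
theorem piExpect_ite_mul_max_sub_le (hw : ∀ i a, 0 ≤ w i a) {t : ι} (ht : ∑ a, w t a = 1)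
    {v : Ω t → ℝ} {s : Finset (Ω t)} {x y : ℝ} (hx : ∑ a ∈ s, w t a = x)
    (hxy : ∑ a ∈ s, w t a * v a = x * y) {p : (∀ i, Ω i) → Prop} [DecidablePred p]
    (hp : ∀ ω a, p (update ω t a) ↔ p ω) {θ : (∀ i, Ω i) → ℝ}
    (hθ : ∀ ω a, θ (update ω t a) = θ ω) :
    piExpect w (fun ω => if p ω then x * max (y - θ ω) 0 else 0) ≤
      piExpect w (fun ω => if p ω then max (v (ω t) - θ ω) 0 else 0) := by
  refine (piExpect_mono hw fun ω => ?_).trans_eq (piExpect_sum_update t ht _)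
  simp only [hp, hθ, update_self]
  split_ifs
  · exact mul_max_sub_le_sum_mul_max_sub (hw t) hx hxy (θ ω)
  · simp

end PiExpect

theorem sum_le_sum_sum_filter_of_forall_exists {ι M : Type*} [Fintype ι] [AddCommMonoid M]
    [PartialOrder M] [IsOrderedAddMonoid M] {f : ι → M}
    (hf : ∀ i, 0 ≤ f i) (r : ι → ι → Prop) [DecidableRel r] {s Y : Finset ι}
    (h : ∀ i ∈ s, ∃ z ∈ Y, r z i) :
    ∑ i ∈ s, f i ≤ ∑ z ∈ Y, ∑ i with r z i, f i := by
  have hnonneg : ∀ i, ∀ z ∈ Y, 0 ≤ if r z i then f i else 0 := fun i z _ => by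
    split_ifs
    exacts [hf i, le_rfl]
  calc ∑ i ∈ s, f i ≤ ∑ i ∈ s, ∑ z ∈ Y, if r z i then f i else 0 := sum_le_sum fun i hi => by
        obtain ⟨z, hz, hr⟩ := h i hi
        simpa only [if_pos hr] using single_le_sum (hnonneg i) hz
    _ ≤ ∑ i, ∑ z ∈ Y, if r z i then f i else 0 :=
        sum_le_sum_of_subset_of_nonneg (subset_univ s) fun i _ _ => sum_nonneg (hnonneg i)
    _ = ∑ z ∈ Y, ∑ i with r z i, f i := by
        rw [sum_comm]
        simp only [sum_filter]

/-- Agents `0, …, T-1` arrive in order and `Y ω k` is the set accepted among the first `k` of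
them (the paper's `Y_k`, with agents indexed from `0`). -/
structure IsOnlineSelection {T : ℕ} {Ω : Fin T → Type*}
    (accept : ∀ t : Fin T, Finset (Fin T) → Ω t → Prop) [∀ t S o, Decidable (accept t S o)]
    (Y : (∀ t, Ω t) → ℕ → Finset (Fin T)) : Prop where
  zero : ∀ ω, Y ω 0 = ∅
  succ : ∀ ω (t : Fin T),
    Y ω (t.val + 1) = if accept t (Y ω t.val) (ω t) then insert t (Y ω t.val) else Y ω t.val

namespace IsOnlineSelection

variable {T : ℕ} {Ω : Fin T → Type*} {accept : ∀ t : Fin T, Finset (Fin T) → Ω t → Prop}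
  [∀ t S o, Decidable (accept t S o)] {Y : (∀ t, Ω t) → ℕ → Finset (Fin T)}

theorem succ_of_lt (hY : IsOnlineSelection accept Y) (ω : ∀ t, Ω t) {k : ℕ} (hk : k < T) :
    Y ω (k + 1) = if accept ⟨k, hk⟩ (Y ω k) (ω ⟨k, hk⟩) then insert ⟨k, hk⟩ (Y ω k) else Y ω k :=
  hY.succ ω ⟨k, hk⟩

theorem invariant (hY : IsOnlineSelection accept Y) {P : Finset (Fin T) → Prop} (h0 : P ∅)
    (hP : ∀ t S o, P S → accept t S o → P (insert t S)) (ω : ∀ t, Ω t) {k : ℕ} (hk : k ≤ T) :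
    P (Y ω k) := by
  induction k with
  | zero => rw [hY.zero]; exact h0
  | succ k ih =>
    rw [hY.succ_of_lt ω hk]
    split_ifs with hacc
    exacts [hP _ _ _ (ih (Nat.le_of_succ_le hk)) hacc, ih (Nat.le_of_succ_le hk)]

theorem lt_of_mem (hY : IsOnlineSelection accept Y) (ω : ∀ t, Ω t) {k : ℕ} (hk : k ≤ T)
    {s : Fin T} (hs : s ∈ Y ω k) : s.val < k := by
  induction k with
  | zero => simp [hY.zero ω] at hs
  | succ k ih =>
    rw [hY.succ_of_lt ω hk] at hs
    split_ifs at hs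
    · rcases mem_insert.mp hs with rfl | hs
      exacts [Nat.lt_succ_self k, Nat.lt_succ_of_lt (ih (Nat.le_of_succ_le hk) hs)]
    · exact Nat.lt_succ_of_lt (ih (Nat.le_of_succ_le hk) hs)

theorem subset_of_le (hY : IsOnlineSelection accept Y) (ω : ∀ t, Ω t) {k m : ℕ} (hkm : k ≤ m)
    (hm : m ≤ T) : Y ω k ⊆ Y ω m := by
  induction m, hkm using Nat.le_induction with
  | base => exact subset_rfl
  | succ m _ ih =>
    refine subset_trans (ih (Nat.le_of_succ_le hm)) ?_
    rw [hY.succ_of_lt ω hm]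
    split_ifs
    exacts [subset_insert _ _, subset_rfl]

theorem eq_of_forall_lt (hY : IsOnlineSelection accept Y) {ω ω' : ∀ t, Ω t} {k : ℕ}
    (hk : k ≤ T) (h : ∀ s : Fin T, s.val < k → ω s = ω' s) : Y ω k = Y ω' k := by
  induction k with
  | zero => rw [hY.zero, hY.zero]
  | succ k ih =>
    rw [hY.succ_of_lt ω hk, hY.succ_of_lt ω' hk,
      ih (Nat.le_of_succ_le hk) fun s hs => h s (Nat.lt_succ_of_lt hs),
      h ⟨k, hk⟩ (Nat.lt_succ_self k)]

theorem update_eq (hY : IsOnlineSelection accept Y) (ω : ∀ t, Ω t) (t : Fin T) (a : Ω t) :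
    Y (update ω t a) t = Y ω t :=
  hY.eq_of_forall_lt t.isLt.le fun _ hs => update_of_ne (Fin.ne_of_lt hs) a ω

theorem mem_iff (hY : IsOnlineSelection accept Y) (ω : ∀ t, Ω t) (t : Fin T) :
    t ∈ Y ω T ↔ accept t (Y ω t) (ω t) := by
  have hstable : ∀ k, t.val + 1 ≤ k → k ≤ T → (t ∈ Y ω k ↔ t ∈ Y ω (t.val + 1)) := by
    intro k hk
    induction k, hk using Nat.le_induction with
    | base => exact fun _ => Iff.rfl
    | succ k htk ih =>
      intro hk
      rw [hY.succ_of_lt ω hk, ← ih (Nat.le_of_succ_le hk)]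
      split_ifs
      · exact mem_insert.trans (or_iff_right fun h => by simp only [Fin.ext_iff] at h; omega)
      · exact Iff.rfl
  rw [hstable T t.isLt le_rfl, hY.succ ω t]
  split_ifs with hacc
  · exact iff_of_true (mem_insert_self t _) hacc
  · exact iff_of_false (fun h => (hY.lt_of_mem ω t.isLt.le h).false) hacc

theorem sum_sub_eq_sum_ite_max (hY : IsOnlineSelection accept Y)
    {feas : Fin T → Finset (Fin T) → Prop} [∀ t S, Decidable (feas t S)]
    {c : Fin T → Finset (Fin T) → ℝ} {v : ∀ t, Ω t → ℝ}
    (hacc : ∀ t S o, accept t S o ↔ feas t S ∧ c t S ≤ v t o) (ω : ∀ t, Ω t) :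
    ∑ t ∈ Y ω T, (v t (ω t) - c t (Y ω t)) =
      ∑ t, if feas t (Y ω t) then max (v t (ω t) - c t (Y ω t)) 0 else 0 := by
  rw [← univ_inter (Y ω T), ← sum_ite_mem]
  refine sum_congr rfl fun t _ => ?_
  simp only [hY.mem_iff, hacc]
  split_ifs with hacc' hf hf
  · exact (max_eq_left (sub_nonneg.mpr hacc'.2)).symm
  · exact absurd hacc'.1 hf
  · exact (max_eq_right (sub_nonpos.mpr (le_of_not_ge fun hc => hacc' ⟨hf, hc⟩))).symm
  · rfl

theorem exists_lt_adj_of_not_isIndepSet (hY : IsOnlineSelection accept Y)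
    {G : SimpleGraph (Fin T)}
    (hG : ∀ t S o, accept t S o → G.IsIndepSet ↑(insert t S)) (ω : ∀ t, Ω t) {u : Fin T}
    (hu : ¬ G.IsIndepSet ↑(insert u (Y ω u))) : ∃ z ∈ Y ω T, z < u ∧ G.Adj z u := by
  have hind : G.IsIndepSet ↑(Y ω u) :=
    hY.invariant (P := fun S => G.IsIndepSet ↑S) (by simp) (fun t S o _ => hG t S o) ω u.isLt.le
  rw [coe_insert, SimpleGraph.IsIndepSet, Set.pairwise_insert] at hu
  push Not at hu
  obtain ⟨z, hz, -, hadj⟩ := hu hind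
  refine ⟨z, hY.subset_of_le ω u.isLt.le le_rfl hz, hY.lt_of_mem ω u.isLt.le hz, ?_⟩
  exact by_contra fun h => h (hadj fun h' => h h'.symm)

theorem sum_mul_max_le_add_sum_price (hY : IsOnlineSelection accept Y)
    {Indep : Finset (Fin T) → Prop} [DecidablePred Indep] {G : SimpleGraph (Fin T)}
    [DecidableRel G.Adj] (hG : ∀ t S o, accept t S o → G.IsIndepSet ↑(insert t S))
    {x y pi : Fin T → ℝ} (hx0 : ∀ t, 0 ≤ x t)
    (hpi : ∀ t, pi t = ∑ t' ∈ univ.filter (fun t' => t < t' ∧ G.Adj t t'),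
      x t' * max (y t' - pi t') 0)
    {τ : Fin T → Finset (Fin T) → ℝ}
    (hτ : ∀ (t : Fin T) (Y' : Finset (Fin T)), (∀ s ∈ Y', s < t) → 0 ≤ τ t Y')
    (ω : ∀ t, Ω t) :
    ∑ t ∈ univ.filter (fun t : Fin T => Indep (insert t (Y ω t))),
        x t * max (y t - τ t (Y ω t) - pi t) 0 ≤
      (∑ t : Fin T, if Indep (insert t (Y ω t)) ∧ G.IsIndepSet ↑(insert t (Y ω t))
        then x t * max (y t - (τ t (Y ω t) + pi t)) 0 else 0) + ∑ z ∈ Y ω T, pi z := by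
  rw [← sum_filter_add_sum_filter_not _ (fun t : Fin T => G.IsIndepSet ↑(insert t (Y ω t))),
    filter_filter, sum_filter]
  refine add_le_add (le_of_eq (sum_congr rfl fun t _ => by rw [sub_sub])) ?_
  calc _ ≤ ∑ u ∈ (univ.filter fun t : Fin T => Indep (insert t (Y ω t))).filter
          (fun u : Fin T => ¬ G.IsIndepSet ↑(insert u (Y ω u))), x u * max (y u - pi u) 0 := by
        refine sum_le_sum fun u _ => mul_le_mul_of_nonneg_left (max_le_max_right 0 ?_) (hx0 u)
        linarith [hτ u _ fun s hs => hY.lt_of_mem ω u.isLt.le hs]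
    _ ≤ ∑ z ∈ Y ω T, ∑ u ∈ univ.filter (fun u => z < u ∧ G.Adj z u), x u * max (y u - pi u) 0 :=
        sum_le_sum_sum_filter_of_forall_exists (fun u => mul_nonneg (hx0 u) (le_max_right _ _))
          _ fun u hu => hY.exists_lt_adj_of_not_isIndepSet hG ω (mem_filter.mp hu).2
    _ = ∑ z ∈ Y ω T, pi z := sum_congr rfl fun z _ => (hpi z).symm

end IsOnlineSelection

attribute [local instance] Classical.propDecidable

theorem stmt_5_general
    (T : ℕ)
    (Ω : Fin T → Type) [∀ t, Fintype (Ω t)]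
    (w : ∀ t, Ω t → ℝ)
    (hw0 : ∀ t o, 0 ≤ w t o)
    (hw1 : ∀ t, ∑ o, w t o = 1)
    (v : ∀ t, Ω t → ℝ)
    (Indep : Finset (Fin T) → Prop)
    (G : SimpleGraph (Fin T))
    (x : Fin T → ℝ) (hx0 : ∀ t, 0 ≤ x t)
    (y : Fin T → ℝ)
    -- the quantile events B_t realizing (x_t, y_t)
    (B : Fin T → Set ℝ)
    (hB1 : ∀ t, ∑ o ∈ univ.filter (fun o => v t o ∈ B t), w t o = x t)
    (hB2 : ∀ t, ∑ o ∈ univ.filter (fun o => v t o ∈ B t), w t o * v t o = x t * y t)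
    -- backward recursion defining π
    (pi : Fin T → ℝ)
    (hpi : ∀ t, pi t = ∑ t' ∈ univ.filter (fun t' => t < t' ∧ G.Adj t t'),
      x t' * max (y t' - pi t') 0)
    -- τ: any nonnegative function of (t, Y') with Y' ⊆ {1,...,t−1}
    (τ : Fin T → Finset (Fin T) → ℝ)
    (hτ : ∀ (t : Fin T) (Y' : Finset (Fin T)), (∀ s ∈ Y', s < t) → 0 ≤ τ t Y')
    -- the accepted-set process
    (Yproc : (∀ t, Ω t) → ℕ → Finset (Fin T))
    (hY0 : ∀ ω, Yproc ω 0 = ∅)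
    (hYstep : ∀ (ω : ∀ t, Ω t) (t : Fin T),
      Yproc ω (t.val + 1) =
        if Indep (insert t (Yproc ω t.val)) ∧
            (∀ a ∈ insert t (Yproc ω t.val), ∀ b ∈ insert t (Yproc ω t.val),
              a ≠ b → ¬ G.Adj a b) ∧
            τ t (Yproc ω t.val) + pi t ≤ v t (ω t)
        then insert t (Yproc ω t.val) else Yproc ω t.val) :
    ∑ ω : (∀ t, Ω t), (∏ t, w t (ω t)) *
        ∑ t ∈ Yproc ω T, (v t (ω t) - τ t (Yproc ω t.val)) ≥
      ∑ ω : (∀ t, Ω t), (∏ t, w t (ω t)) *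
        ∑ t ∈ univ.filter (fun t : Fin T => Indep (insert t (Yproc ω t.val))),
          x t * max (y t - τ t (Yproc ω t.val) - pi t) 0 := by
  have hY : IsOnlineSelection (fun t S o => Indep (insert t S) ∧
      G.IsIndepSet ↑(insert t S) ∧ τ t S + pi t ≤ v t o) Yproc :=
    ⟨hY0, fun ω t => (hYstep ω t).trans (if_congr Iff.rfl rfl rfl)⟩
  have hsurplus : ∀ ω, ∑ t ∈ Yproc ω T, (v t (ω t) - τ t (Yproc ω t)) =
      (∑ t : Fin T, if Indep (insert t (Yproc ω t)) ∧ G.IsIndepSet ↑(insert t (Yproc ω t))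
        then max (v t (ω t) - (τ t (Yproc ω t) + pi t)) 0 else 0) + ∑ t ∈ Yproc ω T, pi t := by
    intro ω
    rw [← hY.sum_sub_eq_sum_ite_max (fun _ _ _ => and_assoc.symm), ← sum_add_distrib]
    exact sum_congr rfl fun t _ => by ring
  have hprice := fun ω => hY.sum_mul_max_le_add_sum_price (Indep := Indep) (fun _ _ _ h => h.2.1)
    hx0 hpi hτ ω
  change piExpect w _ ≤ piExpect w _
  refine (piExpect_mono hw0 hprice).trans ?_
  simp_rw [hsurplus]
  rw [piExpect_add, piExpect_add, piExpect_sum, piExpect_sum]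
  gcongr with t
  exact piExpect_ite_mul_max_sub_le hw0 (hw1 t) (hB1 t) (hB2 t)
    (fun ω a => by rw [hY.update_eq]) (fun ω a => by rw [hY.update_eq])

/-- Proposition 2 of Baek–Ma, the key surplus inequality.
The accepted-set process `Yproc ω k` (the set accepted among the first `k` agents on
sample path `ω`) is characterized by the threshold-acceptance recursion. -/
theorem stmt_5
    (T : ℕ) (hT : 0 < T)
    (Ω : Fin T → Type) [∀ t, Fintype (Ω t)]
    (w : ∀ t, Ω t → ℝ)
    (hw0 : ∀ t o, 0 ≤ w t o)
    (hw1 : ∀ t, ∑ o, w t o = 1)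
    (v : ∀ t, Ω t → ℝ)
    (hv : ∀ t o, 0 ≤ v t o)
    (Indep : Finset (Fin T) → Prop)
    (hIempty : Indep ∅)
    (hIdown : ∀ ⦃S S' : Finset (Fin T)⦄, S' ⊆ S → Indep S → Indep S')
    (hIexch : ∀ ⦃S S' : Finset (Fin T)⦄, Indep S → Indep S' → S'.card < S.card →
      ∃ t ∈ S \ S', Indep (insert t S'))
    (G : SimpleGraph (Fin T))
    (x : Fin T → ℝ) (hx0 : ∀ t, 0 ≤ x t) (hx1 : ∀ t, x t ≤ 1)
    (y : Fin T → ℝ)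
    -- the quantile events B_t realizing (x_t, y_t)
    (B : Fin T → Set ℝ)
    (hB1 : ∀ t, ∑ o ∈ univ.filter (fun o => v t o ∈ B t), w t o = x t)
    (hB2 : ∀ t, ∑ o ∈ univ.filter (fun o => v t o ∈ B t), w t o * v t o = x t * y t)
    -- backward recursion defining π
    (pi : Fin T → ℝ)
    (hpi : ∀ t, pi t = ∑ t' ∈ univ.filter (fun t' => t < t' ∧ G.Adj t t'),
      x t' * max (y t' - pi t') 0)
    -- τ: any nonnegative function of (t, Y') with Y' ⊆ {1,...,t−1}
    (τ : Fin T → Finset (Fin T) → ℝ)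
    (hτ : ∀ (t : Fin T) (Y' : Finset (Fin T)), (∀ s ∈ Y', s < t) → 0 ≤ τ t Y')
    -- the accepted-set process
    (Yproc : (∀ t, Ω t) → ℕ → Finset (Fin T))
    (hY0 : ∀ ω, Yproc ω 0 = ∅)
    (hYstep : ∀ (ω : ∀ t, Ω t) (t : Fin T),
      Yproc ω (t.val + 1) =
        if Indep (insert t (Yproc ω t.val)) ∧
            (∀ a ∈ insert t (Yproc ω t.val), ∀ b ∈ insert t (Yproc ω t.val),
              a ≠ b → ¬ G.Adj a b) ∧
            τ t (Yproc ω t.val) + pi t ≤ v t (ω t)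
        then insert t (Yproc ω t.val) else Yproc ω t.val) :
    ∑ ω : (∀ t, Ω t), (∏ t, w t (ω t)) *
        ∑ t ∈ Yproc ω T, (v t (ω t) - τ t (Yproc ω t.val)) ≥
      ∑ ω : (∀ t, Ω t), (∏ t, w t (ω t)) *
        ∑ t ∈ univ.filter (fun t : Fin T => Indep (insert t (Yproc ω t.val))),
          x t * max (y t - τ t (Yproc ω t.val) - pi t) 0 :=
  stmt_5_general T Ω w hw0 hw1 v Indep G x hx0 y B hB1 hB2 pi hpi τ hτ Yproc hY0 hYstep
end

section
/- Let N be a finite set of items partitioned into N_1,...,N_T (item i ∈ N_t has arrival time a(i) = t), let J be a finite set of resources, and for each item i let U_i ⊆ J with |U_i| ≤ d and, for each j ∈ U_i, an interval I_i^j = [a(i), u_i^j] with u_i^j ≥ a(i). Let G be the simple graph on N in which distinct items i and i' are adjacent iff there exists j ∈ U_i ∩ U_{i'} with I_i^j ∩ I_{i'}^j ≠ ∅. Then for every item i ∈ N_t, every G-independent subset of { i' ∈ N_{t'} : t' < t and {i,i'} ∈ E(G) } has cardinality at most d; that is, d2(G) ≤ d. -/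
open Finset

attribute [local instance] Classical.propDecidable

/-- Proposition 6 of Baek–Ma: in the `d`-dimensional
interval-scheduling model, every `G`-independent set of strictly earlier neighbors
of an item has cardinality at most `d`, i.e. `d2(G) ≤ d`.  Item `i` arrives at time
`a i` and occupies resource `j ∈ U i` during `[a i, u i j]`. -/
theorem stmt_10
    (ι J : Type) [Fintype ι] [DecidableEq ι] [DecidableEq J]
    (a : ι → ℕ) (d : ℕ)
    (U : ι → Finset J) (hU : ∀ i, (U i).card ≤ d)
    (u : ι → J → ℝ) (hu : ∀ i, ∀ j ∈ U i, (a i : ℝ) ≤ u i j)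
    (G : SimpleGraph ι)
    (hG : ∀ i i' : ι, i ≠ i' →
      (G.Adj i i' ↔ ∃ j ∈ U i ∩ U i',
        (Set.Icc (a i : ℝ) (u i j) ∩ Set.Icc (a i' : ℝ) (u i' j)).Nonempty)) :
    ∀ i : ι, ∀ S : Finset ι,
      (∀ i' ∈ S, a i' < a i ∧ G.Adj i i') →
      (∀ p ∈ S, ∀ r ∈ S, p ≠ r → ¬ G.Adj p r) →
      S.card ≤ d := by
  intro i S hS hind
  -- For each i' ∈ S, pick a shared resource j ∈ U i ∩ U i' with u i' j ≥ a i.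
  have key : ∀ i' ∈ S, ∃ j, j ∈ U i ∧ j ∈ U i' ∧ (a i : ℝ) ≤ u i' j := by
    intro i' hi'
    obtain ⟨hlt, hadj⟩ := hS i' hi'
    have hne : i ≠ i' := by
      intro h; subst h; exact lt_irrefl _ hlt
    obtain ⟨j, hj, x, hx⟩ := (hG i i' hne).1 hadj
    simp only [Finset.mem_inter] at hj
    obtain ⟨⟨hx1, hx2⟩, _, hx4⟩ := hx
    exact ⟨j, hj.1, hj.2, le_trans hx1 hx4⟩
  choose f hf1 hf2 hf3 using key
  -- The map is injective into U i.
  classical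
  have hinj : ∀ p ∈ S, ∀ r ∈ S, ∀ (hp : p ∈ S) (hr : r ∈ S),
      f p hp = f r hr → p = r := by
    intro p _ r _ hp hr heq
    by_contra hpr
    apply hind p hp r hr hpr
    have hnep : p ≠ r := hpr
    rw [hG p r hnep]
    refine ⟨f p hp, Finset.mem_inter.2 ⟨hf2 p hp, heq ▸ hf2 r hr⟩, (a i : ℝ), ?_, ?_⟩
    · exact Set.mem_Icc.2 ⟨by exact_mod_cast (hS p hp).1.le, hf3 p hp⟩
    · exact Set.mem_Icc.2 ⟨by exact_mod_cast (hS r hr).1.le, heq ▸ hf3 r hr⟩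
  calc S.card = (S.attach.image (fun x => f x.1 x.2)).card := by
        rw [Finset.card_image_of_injective _ ?_, Finset.card_attach]
        · intro x y hxy
          exact Subtype.ext (hinj x.1 x.2 y.1 y.2 x.2 y.2 hxy)
    _ ≤ (U i).card := by
        apply Finset.card_le_card
        intro j hj
        simp only [Finset.mem_image, Finset.mem_attach, true_and] at hj
        obtain ⟨x, hx⟩ := hj
        exact hx ▸ hf1 x.1 x.2
    _ ≤ d := hU i
end

section
/- Let T be a positive integer and, for each agent t ∈ {1,...,T}, let U_t ⊆ J be a set of at most d resources and I_t^j = [t, u_t^j] an interval with u_t^j ≥ t for each j ∈ U_t. Let E be the edge set on {1,...,T} where distinct t, t' are adjacent iff I_t^j ∩ I_{t'}^j ≠ ∅ for some j ∈ U_t ∩ U_{t'}. Suppose x : {1,...,T} → ℝ≥0 satisfies, for every t and every j ∈ U_t, Σ over t' ≤ t with j ∈ U_{t'} and t ∈ I_{t'}^j of x_{t'} ≤ 1. Then for every t: Σ over t' < t with {t,t'} ∈ E of x_{t'} ≤ d. -/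
open Finset

attribute [local instance] Classical.propDecidable

private lemma sum_biUnion_le' {ι β : Type*} [DecidableEq β] (s : Finset ι) (f : ι → Finset β)
    (g : β → ℝ) (hg : ∀ b, 0 ≤ g b) :
    ∑ b ∈ s.biUnion f, g b ≤ ∑ i ∈ s, ∑ b ∈ f i, g b := by
  induction s using Finset.cons_induction with
  | empty => simp
  | cons a s ha ih =>
    rw [Finset.cons_eq_insert, Finset.biUnion_insert, Finset.sum_insert ha]
    have h1 : ∑ b ∈ f a ∪ s.biUnion f, g b ≤ ∑ b ∈ f a, g b + ∑ b ∈ s.biUnion f, g b := by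
      have := Finset.sum_union_inter (s₁ := f a) (s₂ := s.biUnion f) (f := g)
      have h2 : 0 ≤ ∑ b ∈ f a ∩ s.biUnion f, g b := Finset.sum_nonneg fun b _ => hg b
      linarith
    exact h1.trans (by linarith)

/-- core combinatorial step of Proposition 3 of Baek–Ma: the LP
occupancy constraints imply that the total fractional mass of strictly earlier
conflicting agents of any agent `t` is at most `d`.  Agent `t : Fin T` arrives at
real time `t.val` and occupies resource `j ∈ U t` during `[t.val, u t j]`; distinct
agents conflict iff their intervals overlap on a common resource. -/
theorem stmt_12
    (T : ℕ) (J : Type) [DecidableEq J] (d : ℕ)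
    (U : Fin T → Finset J) (hU : ∀ t, (U t).card ≤ d)
    (u : Fin T → J → ℝ) (hu : ∀ t : Fin T, ∀ j ∈ U t, (t.val : ℝ) ≤ u t j)
    (x : Fin T → ℝ) (hx : ∀ t, 0 ≤ x t)
    (hLP : ∀ t : Fin T, ∀ j ∈ U t,
      ∑ t' ∈ univ.filter (fun t' : Fin T => t' ≤ t ∧ j ∈ U t' ∧
          (t.val : ℝ) ∈ Set.Icc (t'.val : ℝ) (u t' j)),
        x t' ≤ 1) :
    ∀ t : Fin T,
      ∑ t' ∈ univ.filter (fun t' : Fin T => t' < t ∧ t' ≠ t ∧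
          ∃ j ∈ U t ∩ U t',
            (Set.Icc (t.val : ℝ) (u t j) ∩ Set.Icc (t'.val : ℝ) (u t' j)).Nonempty),
        x t' ≤ d := by
  intro t
  set A : J → Finset (Fin T) := fun j => univ.filter (fun t' : Fin T => t' ≤ t ∧ j ∈ U t' ∧
          (t.val : ℝ) ∈ Set.Icc (t'.val : ℝ) (u t' j)) with hA
  have hsub : (univ.filter (fun t' : Fin T => t' < t ∧ t' ≠ t ∧
          ∃ j ∈ U t ∩ U t',
            (Set.Icc (t.val : ℝ) (u t j) ∩ Set.Icc (t'.val : ℝ) (u t' j)).Nonempty))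
      ⊆ (U t).biUnion A := by
    intro t' ht'
    simp only [mem_filter, mem_univ, true_and] at ht'
    obtain ⟨hlt, -, j, hj, ⟨y, hy1, hy2⟩⟩ := ht'
    rw [Finset.mem_inter] at hj
    refine Finset.mem_biUnion.2 ⟨j, hj.1, ?_⟩
    simp only [hA, mem_filter, mem_univ, true_and]
    refine ⟨le_of_lt hlt, hj.2, ?_⟩
    have hval : t'.val ≤ t.val := le_of_lt hlt
    have hcast : (t'.val : ℝ) ≤ t.val := Nat.cast_le.2 hval
    exact ⟨hcast, le_trans hy1.1 hy2.2⟩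
  calc ∑ t' ∈ univ.filter (fun t' : Fin T => t' < t ∧ t' ≠ t ∧
          ∃ j ∈ U t ∩ U t',
            (Set.Icc (t.val : ℝ) (u t j) ∩ Set.Icc (t'.val : ℝ) (u t' j)).Nonempty), x t'
      ≤ ∑ t' ∈ (U t).biUnion A, x t' :=
        Finset.sum_le_sum_of_subset_of_nonneg hsub (fun i _ _ => hx i)
    _ ≤ ∑ j ∈ U t, ∑ t' ∈ A j, x t' := sum_biUnion_le' _ _ _ hx
    _ ≤ ∑ j ∈ U t, 1 := Finset.sum_le_sum fun j hj => hLP t j hj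
    _ = (U t).card := by simp
    _ ≤ d := by exact_mod_cast hU t
end

section
/- Let N be a finite set of items partitioned into N_1,...,N_T, let G be a simple graph on N, and let d be a natural number such that for every t and every item i' ∈ N_t, every G-independent subset of { i ∈ N_{t'} : t' < t and {i,i'} ∈ E(G) } has cardinality at most d. For t ∈ {1,...,T} and k ∈ {1,...,K}, let p_t^k ≥ 0 with Σ_k p_t^k = 1, let x_t^k : 2^{N_t} → [0,1], and let u_t^k(i, S) ∈ ℝ be given for each S ⊆ N_t and i ∈ S. Define, by backward induction over t = T,...,1: π_t(i) = Σ_{t' > t} Σ_k p_{t'}^k Σ_{S' ⊆ N_{t'}} x_{t'}^k(S') Σ_{i' ∈ S'} û_{t'}^k(i', S') · 1({i,i'} ∈ E), where û_t^k(i, S) = max(u_t^k(i, S) − π_t(i), 0). Assume that for every t' and every i' ∈ N_{t'}: Σ_{t < t'} Σ_k p_t^k Σ_{J ⊆ N_t} x_t^k(J) Σ_{i ∈ J} 1({i,i'} ∈ E) ≤ d. Let OPT = Σ_t Σ_k p_t^k Σ_{S ⊆ N_t} x_t^k(S) Σ_{i∈S} u_t^k(i, S) and R̂(∅) = Σ_t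 Σ_k p_t^k Σ_{S ⊆ N_t} x_t^k(S) Σ_{i∈S} û_t^k(i, S). Then R̂(∅) ≥ OPT/(d+1). -/
open Finset

attribute [local instance] Classical.propDecidable


private lemma sum_lt_comm' {n : ℕ} {M : Type*} [AddCommMonoid M] (f : Fin n → Fin n → M) :
    ∑ t, ∑ t' ∈ univ.filter (fun t' => t < t'), f t t'
      = ∑ t', ∑ t ∈ univ.filter (fun t => t < t'), f t t' := by
  simp only [Finset.sum_filter]
  exact Finset.sum_comm

private lemma blocksum' {K : ℕ} {ι : Type} [Fintype ι] [DecidableEq ι]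
    (P : Finset ι) (f : Fin K → Finset ι → ι → ℝ) :
    ∑ k, ∑ S ∈ P.powerset, ∑ i ∈ S, f k S i
      = ∑ z ∈ (univ : Finset (Fin K)) ×ˢ (P.powerset.sigma fun S => S), f z.1 z.2.1 z.2.2 := by
  rw [Finset.sum_product]
  exact Finset.sum_congr rfl fun k _ => (Finset.sum_sigma P.powerset (fun S => S) (fun z => f k z.1 z.2)).symm
/-- Lemma 4 of Baek–Ma, XOS setting: the restricted prophet's
welfare `R̂(∅)` is at least `OPT/(d+1)`.  Items live in `ι`, item `i` belongs to
agent `a i` (so `N_t` is the fiber of `a` over `t`), `x t k S` is the probability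
that set `S ⊆ N_t` is allocated given valuation realization `k`, `u t k i S` is the
supporting additive value of item `i` at `S`, and `π` satisfies the backward
recursion (9) of the paper. -/
theorem stmt_14
    (T K : ℕ)
    (ι : Type) [Fintype ι] [DecidableEq ι]
    (a : ι → Fin T)
    (G : SimpleGraph ι) (d : ℕ)
    -- d2(G) ≤ d on the strictly earlier neighbors
    (hd2 : ∀ i' : ι, ∀ S : Finset ι,
      (∀ i ∈ S, a i < a i' ∧ G.Adj i i') →
      (∀ p' ∈ S, ∀ q' ∈ S, p' ≠ q' → ¬ G.Adj p' q') →
      S.card ≤ d)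
    (p : Fin T → Fin K → ℝ)
    (hp0 : ∀ t k, 0 ≤ p t k) (hp1 : ∀ t, ∑ k, p t k = 1)
    (x : Fin T → Fin K → Finset ι → ℝ)
    (hx : ∀ t k S, 0 ≤ x t k S ∧ x t k S ≤ 1)
    (u : Fin T → Fin K → ι → Finset ι → ℝ)
    -- backward recursion defining π
    (pi : ι → ℝ)
    (hpi : ∀ i : ι, pi i =
      ∑ t' ∈ univ.filter (fun t' : Fin T => a i < t'),
        ∑ k, p t' k *
          ∑ S' ∈ (univ.filter (fun i' : ι => a i' = t')).powerset,
            x t' k S' *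
              ∑ i' ∈ S',
                (if G.Adj i i' then max (u t' k i' S' - pi i') 0 else 0))
    -- the ex-ante graph constraint applied to the earlier neighbors of each item
    (hexante : ∀ (t' : Fin T) (i' : ι), a i' = t' →
      ∑ t ∈ univ.filter (fun t : Fin T => t < t'),
        ∑ k, p t k *
          ∑ Jt ∈ (univ.filter (fun i : ι => a i = t)).powerset,
            x t k Jt * ∑ i ∈ Jt, (if G.Adj i i' then (1 : ℝ) else 0) ≤ d) :
    -- R̂(∅) ≥ OPT/(d+1)
    ∑ t, ∑ k, p t k *
        ∑ S ∈ (univ.filter (fun i : ι => a i = t)).powerset,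
          x t k S * ∑ i ∈ S, max (u t k i S - pi i) 0 ≥
      (1 / (d + 1) : ℝ) *
      ∑ t, ∑ k, p t k *
        ∑ S ∈ (univ.filter (fun i : ι => a i = t)).powerset,
          x t k S * ∑ i ∈ S, u t k i S := by
  classical
  -- abbreviations
  let N : Fin T → Finset ι := fun t => univ.filter (fun i : ι => a i = t)
  let L : Fin T → Finset (Fin K × Σ _ : Finset ι, ι) :=
    fun t => (univ : Finset (Fin K)) ×ˢ ((N t).powerset.sigma fun S => S)
  have hmem : ∀ (t : Fin T) (z : Fin K × Σ _ : Finset ι, ι), z ∈ L t →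
      z.2.2 ∈ z.2.1 ∧ a z.2.2 = t := by
    intro t z hz
    simp only [L, Finset.mem_product, Finset.mem_sigma, Finset.mem_powerset] at hz
    obtain ⟨-, hS, hi⟩ := hz
    have := hS hi
    simp only [N, Finset.mem_filter] at this
    exact ⟨hi, this.2⟩
  have block3 : ∀ (t : Fin T) (f : Fin K → Finset ι → ι → ℝ),
      ∑ k, p t k * ∑ S ∈ (N t).powerset, x t k S * ∑ i ∈ S, f k S i
        = ∑ z ∈ L t, p t z.1 * (x t z.1 z.2.1 * f z.1 z.2.1 z.2.2) := by
    intro t f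
    calc ∑ k, p t k * ∑ S ∈ (N t).powerset, x t k S * ∑ i ∈ S, f k S i
        = ∑ k, ∑ S ∈ (N t).powerset, ∑ i ∈ S, p t k * (x t k S * f k S i) := by
          simp only [Finset.mul_sum]
      _ = ∑ z ∈ L t, p t z.1 * (x t z.1 z.2.1 * f z.1 z.2.1 z.2.2) :=
          blocksum' (N t) (fun k S i => p t k * (x t k S * f k S i))
  -- the ex-ante bound in block form
  have hA : ∀ (t' : Fin T) (i' : ι), a i' = t' →
      ∑ t ∈ univ.filter (fun t : Fin T => t < t'), ∑ z ∈ L t,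
        p t z.1 * (x t z.1 z.2.1 * (if G.Adj z.2.2 i' then (1:ℝ) else 0)) ≤ d := by
    intro t' i' h
    have h2 := hexante t' i' h
    calc ∑ t ∈ univ.filter (fun t : Fin T => t < t'), ∑ z ∈ L t,
          p t z.1 * (x t z.1 z.2.1 * (if G.Adj z.2.2 i' then (1:ℝ) else 0))
        = ∑ t ∈ univ.filter (fun t : Fin T => t < t'),
            ∑ k, p t k * ∑ Jt ∈ (N t).powerset, x t k Jt *
              ∑ i ∈ Jt, (if G.Adj i i' then (1:ℝ) else 0) :=
          Finset.sum_congr rfl fun t _ => (block3 t (fun _ _ i => if G.Adj i i' then (1:ℝ) else 0)).symm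
      _ ≤ d := h2
  -- step 3 : the π-mass is at most d * R̂
  have hP : ∑ t, ∑ k, p t k * ∑ S ∈ (N t).powerset, x t k S * ∑ i ∈ S, pi i
      ≤ (d:ℝ) * ∑ t, ∑ k, p t k * ∑ S ∈ (N t).powerset,
          x t k S * ∑ i ∈ S, max (u t k i S - pi i) 0 := by
    calc ∑ t, ∑ k, p t k * ∑ S ∈ (N t).powerset, x t k S * ∑ i ∈ S, pi i
        = ∑ t, ∑ z ∈ L t, p t z.1 * (x t z.1 z.2.1 * pi z.2.2) :=
          Finset.sum_congr rfl fun t _ => block3 t _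
      _ = ∑ t, ∑ z ∈ L t, ∑ t' ∈ univ.filter (fun t' : Fin T => t < t'), ∑ z' ∈ L t',
            p t z.1 * (x t z.1 z.2.1 * (p t' z'.1 * (x t' z'.1 z'.2.1 *
              (if G.Adj z.2.2 z'.2.2 then max (u t' z'.1 z'.2.2 z'.2.1 - pi z'.2.2) 0 else 0)))) := by
          refine Finset.sum_congr rfl fun t _ => Finset.sum_congr rfl fun z hz => ?_
          obtain ⟨hiS, hat⟩ := hmem t z hz
          rw [hpi z.2.2, hat]
          simp only [Finset.mul_sum]
          refine Finset.sum_congr rfl fun t' _ => ?_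
          exact blocksum' (N t') (fun k' S' i' => p t z.1 * (x t z.1 z.2.1 *
            (p t' k' * (x t' k' S' *
              (if G.Adj z.2.2 i' then max (u t' k' i' S' - pi i') 0 else 0)))))
      _ = ∑ t, ∑ t' ∈ univ.filter (fun t' : Fin T => t < t'), ∑ z ∈ L t, ∑ z' ∈ L t',
            p t z.1 * (x t z.1 z.2.1 * (p t' z'.1 * (x t' z'.1 z'.2.1 *
              (if G.Adj z.2.2 z'.2.2 then max (u t' z'.1 z'.2.2 z'.2.1 - pi z'.2.2) 0 else 0)))) :=
          Finset.sum_congr rfl fun t _ => Finset.sum_comm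
      _ = ∑ t', ∑ t ∈ univ.filter (fun t : Fin T => t < t'), ∑ z ∈ L t, ∑ z' ∈ L t',
            p t z.1 * (x t z.1 z.2.1 * (p t' z'.1 * (x t' z'.1 z'.2.1 *
              (if G.Adj z.2.2 z'.2.2 then max (u t' z'.1 z'.2.2 z'.2.1 - pi z'.2.2) 0 else 0)))) :=
          sum_lt_comm' _
      _ = ∑ t', ∑ t ∈ univ.filter (fun t : Fin T => t < t'), ∑ z' ∈ L t', ∑ z ∈ L t,
            p t z.1 * (x t z.1 z.2.1 * (p t' z'.1 * (x t' z'.1 z'.2.1 *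
              (if G.Adj z.2.2 z'.2.2 then max (u t' z'.1 z'.2.2 z'.2.1 - pi z'.2.2) 0 else 0)))) :=
          Finset.sum_congr rfl fun t' _ => Finset.sum_congr rfl fun t _ => Finset.sum_comm
      _ = ∑ t', ∑ z' ∈ L t', ∑ t ∈ univ.filter (fun t : Fin T => t < t'), ∑ z ∈ L t,
            p t z.1 * (x t z.1 z.2.1 * (p t' z'.1 * (x t' z'.1 z'.2.1 *
              (if G.Adj z.2.2 z'.2.2 then max (u t' z'.1 z'.2.2 z'.2.1 - pi z'.2.2) 0 else 0)))) :=
          Finset.sum_congr rfl fun t' _ => Finset.sum_comm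
      _ = ∑ t', ∑ z' ∈ L t',
            (p t' z'.1 * (x t' z'.1 z'.2.1 * max (u t' z'.1 z'.2.2 z'.2.1 - pi z'.2.2) 0)) *
            (∑ t ∈ univ.filter (fun t : Fin T => t < t'), ∑ z ∈ L t,
              p t z.1 * (x t z.1 z.2.1 * (if G.Adj z.2.2 z'.2.2 then (1:ℝ) else 0))) := by
          refine Finset.sum_congr rfl fun t' _ => Finset.sum_congr rfl fun z' _ => ?_
          rw [Finset.mul_sum]
          refine Finset.sum_congr rfl fun t _ => ?_
          rw [Finset.mul_sum]
          refine Finset.sum_congr rfl fun z _ => ?_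
          by_cases h : G.Adj z.2.2 z'.2.2 <;> simp [h] <;> ring
      _ ≤ ∑ t', ∑ z' ∈ L t',
            (p t' z'.1 * (x t' z'.1 z'.2.1 * max (u t' z'.1 z'.2.2 z'.2.1 - pi z'.2.2) 0)) * d := by
          refine Finset.sum_le_sum fun t' _ => Finset.sum_le_sum fun z' hz' => ?_
          have hnn : 0 ≤ p t' z'.1 * (x t' z'.1 z'.2.1 * max (u t' z'.1 z'.2.2 z'.2.1 - pi z'.2.2) 0) :=
            mul_nonneg (hp0 _ _) (mul_nonneg (hx _ _ _).1 (le_max_right _ _))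
          exact mul_le_mul_of_nonneg_left (hA t' z'.2.2 (hmem t' z' hz').2) hnn
      _ = (d:ℝ) * ∑ t', ∑ z' ∈ L t',
            p t' z'.1 * (x t' z'.1 z'.2.1 * max (u t' z'.1 z'.2.2 z'.2.1 - pi z'.2.2) 0) := by
          rw [Finset.mul_sum]
          refine Finset.sum_congr rfl fun t' _ => ?_
          rw [Finset.mul_sum]
          exact Finset.sum_congr rfl fun z' _ => mul_comm _ _
      _ = (d:ℝ) * ∑ t, ∑ k, p t k * ∑ S ∈ (N t).powerset,
            x t k S * ∑ i ∈ S, max (u t k i S - pi i) 0 := by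
          congr 1
          exact Finset.sum_congr rfl fun t _ => (block3 t (fun k S i => max (u t k i S - pi i) 0)).symm
  -- step 2 : OPT ≤ R̂ + π-mass
  have hOPT : ∑ t, ∑ k, p t k * ∑ S ∈ (N t).powerset, x t k S * ∑ i ∈ S, u t k i S
      ≤ (∑ t, ∑ k, p t k * ∑ S ∈ (N t).powerset, x t k S * ∑ i ∈ S, max (u t k i S - pi i) 0)
        + ∑ t, ∑ k, p t k * ∑ S ∈ (N t).powerset, x t k S * ∑ i ∈ S, pi i := by
    calc ∑ t, ∑ k, p t k * ∑ S ∈ (N t).powerset, x t k S * ∑ i ∈ S, u t k i S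
        ≤ ∑ t, ∑ k, p t k * ∑ S ∈ (N t).powerset, x t k S *
            ∑ i ∈ S, (max (u t k i S - pi i) 0 + pi i) := by
          refine Finset.sum_le_sum fun t _ => Finset.sum_le_sum fun k _ =>
            mul_le_mul_of_nonneg_left (Finset.sum_le_sum fun S _ =>
              mul_le_mul_of_nonneg_left (Finset.sum_le_sum fun i _ => ?_) (hx t k S).1) (hp0 t k)
          have := le_max_left (u t k i S - pi i) 0
          linarith
      _ = _ := by
          simp only [Finset.sum_add_distrib, mul_add]
  -- conclude
  have hdpos : (0:ℝ) < (d:ℝ) + 1 := by positivity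
  rw [ge_iff_le, one_div, inv_mul_eq_div, div_le_iff₀ hdpos]
  calc ∑ t, ∑ k, p t k * ∑ S ∈ (N t).powerset, x t k S * ∑ i ∈ S, u t k i S
      ≤ (∑ t, ∑ k, p t k * ∑ S ∈ (N t).powerset, x t k S * ∑ i ∈ S, max (u t k i S - pi i) 0)
        + (d:ℝ) * ∑ t, ∑ k, p t k * ∑ S ∈ (N t).powerset,
            x t k S * ∑ i ∈ S, max (u t k i S - pi i) 0 := by linarith
    _ = (∑ t, ∑ k, p t k * ∑ S ∈ (N t).powerset,
            x t k S * ∑ i ∈ S, max (u t k i S - pi i) 0) * ((d:ℝ) + 1) := by ring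
end
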